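/- Let e ∈ E(T), let f = (v, u) ∈ S(e, v) with v ∈ U_e and u ∈ D_e, and let b ∈ U_e and c ∈ D_e. Let X be a set of vertices x ∈ U_e such that b lies on the unique path in T from x to v, and let Y be a set of vertices y ∈ D_e such that c lies on the unique path in T from y to u. Then for every g = (x, y) ∈ S(e, X, Y), it holds that φ(f, g) = Φ_{b,c,g}(t_{b,c}(f)). -/

import Mathlib

open SimpleGraph

variable {V : Type*} [Fintype V] [DecidableEq V]

/-- Total weight of a walk: the sum of the weights of its edges. -/
def pathWeight (w : Sym2 V → ℝ) {G : SimpleGraph V} {x y : V} (p : G.Walk x y) : ℝ :=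
  (p.edges.map w).sum

/-- Weighted shortest-path distance in `G` between `x` and `y`
(infimum of the weights of all paths from `x` to `y`);
in a tree this is the weight of the unique path. -/
noncomputable def wDist (G : SimpleGraph V) (w : Sym2 V → ℝ) (x y : V) : ℝ :=
  sInf {r | ∃ p : G.Walk x y, p.IsPath ∧ r = pathWeight w p}

/-- `G` is 2-edge-connected: connected, and still connected after deleting any edge. -/
def TwoEdgeConnected (G : SimpleGraph V) : Prop :=
  G.Connected ∧ ∀ e ∈ G.edgeSet, (G.deleteEdges {e}).Connected

/-- `U_e`: vertices of the component of `T - e` containing the root. -/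
def Ue (T : SimpleGraph V) (root : V) (e : Sym2 V) : Set V :=
  {v | (T.deleteEdges {e}).Reachable root v}

/-- `D_e`: vertices of the component of `T - e` not containing the root. -/
def De (T : SimpleGraph V) (root : V) (e : Sym2 V) : Set V :=
  {v | ¬ (T.deleteEdges {e}).Reachable root v}

/-- `VSwap G T root e v u` says that `(v, u)`, with `v ∈ U_e` and `u ∈ D_e`,
is (the canonically oriented representation of) a swap edge for `e`:
an edge of `G`, different from `e`, whose endpoints lie in the two
different components of `T - e`. -/
def VSwap (G T : SimpleGraph V) (root : V) (e : Sym2 V) (v u : V) : Prop :=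
  G.Adj v u ∧ s(v, u) ≠ e ∧ v ∈ Ue T root e ∧ u ∈ De T root e

/-- `φ(f, g)` for the swap edge `f = (v, u)` (with `v ∈ U_e`, `u ∈ D_e`) and the swap
edge `g = (x, y)` (with `x ∈ U_e`, `y ∈ D_e`):
`(d_T(x, v) + w(f) + d_T(u, y)) / w(g)`. -/
noncomputable def phi (T : SimpleGraph V) (w : Sym2 V → ℝ) (v u x y : V) : ℝ :=
  (wDist T w x v + w (s(v, u)) + wDist T w u y) / w (s(x, y))

/-- `φ_e(f) = max_{g ∈ S(e)} φ(f, g)` for the swap edge `f = (v, u)`. -/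
noncomputable def phiMax (G T : SimpleGraph V) (w : Sym2 V → ℝ) (root : V) (e : Sym2 V)
    (v u : V) : ℝ :=
  sSup {r | ∃ x y, VSwap G T root e x y ∧ r = phi T w v u x y}

/-- The swap tree `T_{e/f}`: delete `e` from `T` and insert `f`. -/
def swapTree (T : SimpleGraph V) (e f : Sym2 V) : SimpleGraph V :=
  fromEdgeSet ((T.edgeSet \ {e}) ∪ {f})

/-- The stretch factor `σ_H(T')` of `T'` w.r.t. `H`:
the maximum over pairs of distinct vertices of `d_{T'}(x,y) / d_H(x,y)`. -/
noncomputable def stretch (H T' : SimpleGraph V) (w : Sym2 V → ℝ) : ℝ :=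
  sSup {r | ∃ x y : V, x ≠ y ∧ r = wDist T' w x y / wDist H w x y}

/-- `t_{b,c}(f)` for `f = (v, u)`: `d_T(b, v) + w(f) + d_T(u, c)`. -/
noncomputable def tbc (T : SimpleGraph V) (w : Sym2 V → ℝ) (b c v u : V) : ℝ :=
  wDist T w b v + w (s(v, u)) + wDist T w u c

/-- The linear function `Φ_{b,c,g}(t) = t / w(g) + (d_T(x, b) + d_T(c, y)) / w(g)`
for `g = (x, y)`. -/
noncomputable def PhiF (T : SimpleGraph V) (w : Sym2 V → ℝ) (b c x y : V) (t : ℝ) : ℝ :=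
  t / w (s(x, y)) + (wDist T w x b + wDist T w c y) / w (s(x, y))

/-! In a tree, `d_T` is additive along the unique path: if `b` lies on the path from `x` to `v`
then `d_T(x, v) = d_T(x, b) + d_T(b, v)`, and likewise `d_T(u, y) = d_T(u, c) + d_T(c, y)`.
Substituting both into the numerator of `φ(f, g)` regroups it as
`t_{b,c}(f) + d_T(x, b) + d_T(c, y)`. -/

section TreeDistance

variable {α : Type*} {T : SimpleGraph α} (w : Sym2 α → ℝ)

theorem pathWeight_append {x y z : α} (p : T.Walk x y) (q : T.Walk y z) :
    pathWeight w (p.append q) = pathWeight w p + pathWeight w q := by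
  simp only [pathWeight, Walk.edges_append, List.map_append, List.sum_append]

theorem pathWeight_reverse {x y : α} (p : T.Walk x y) :
    pathWeight w p.reverse = pathWeight w p := by
  simp only [pathWeight, Walk.edges_reverse, List.map_reverse, List.sum_reverse]

theorem SimpleGraph.IsTree.wDist_eq_pathWeight (hT : T.IsTree) {x y : α} {p : T.Walk x y}
    (hp : p.IsPath) : wDist T w x y = pathWeight w p := by
  have hpaths : {r | ∃ q : T.Walk x y, q.IsPath ∧ r = pathWeight w q} = {pathWeight w p} := by
    ext r
    constructor
    · rintro ⟨q, hq, rfl⟩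
      rw [(hT.existsUnique_path x y).unique hq hp]
      rfl
    · rintro rfl
      exact ⟨p, hp, rfl⟩
  rw [wDist, hpaths, csInf_singleton]

theorem SimpleGraph.IsTree.wDist_comm (hT : T.IsTree) (x y : α) :
    wDist T w x y = wDist T w y x := by
  obtain ⟨p, hp, -⟩ := hT.existsUnique_path x y
  rw [hT.wDist_eq_pathWeight w hp, hT.wDist_eq_pathWeight w hp.reverse, pathWeight_reverse]

theorem SimpleGraph.IsTree.wDist_eq_add_of_mem_support [DecidableEq α] (hT : T.IsTree)
    {x y m : α} {p : T.Walk x y} (hp : p.IsPath) (hm : m ∈ p.support) :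
    wDist T w x y = wDist T w x m + wDist T w m y := by
  rw [hT.wDist_eq_pathWeight w hp, hT.wDist_eq_pathWeight w (hp.takeUntil hm),
    hT.wDist_eq_pathWeight w (hp.dropUntil hm), ← pathWeight_append, p.take_spec hm]

theorem SimpleGraph.IsTree.wDist_eq_add_of_forall_mem_support [DecidableEq α] (hT : T.IsTree)
    {x y m : α} (hm : ∀ p : T.Walk x y, p.IsPath → m ∈ p.support) :
    wDist T w x y = wDist T w x m + wDist T w m y := by
  obtain ⟨p, hp, -⟩ := hT.existsUnique_path x y
  exact hT.wDist_eq_add_of_mem_support w hp (hm p hp)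

end TreeDistance

theorem stmt_3_general (G T : SimpleGraph V) (w : Sym2 V → ℝ) (root : V)
    (hT : T.IsTree) (e : Sym2 V) (v u : V) (b c : V) (X Y : Set V)
    -- every `x ∈ X` is in `U_e` and `b` lies on the unique path of `T` from `x` to `v`
    (hX : ∀ x ∈ X, x ∈ Ue T root e ∧ ∀ p : T.Walk x v, p.IsPath → b ∈ p.support)
    -- every `y ∈ Y` is in `D_e` and `c` lies on the unique path of `T` from `y` to `u`
    (hY : ∀ y ∈ Y, y ∈ De T root e ∧ ∀ p : T.Walk y u, p.IsPath → c ∈ p.support) :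
    ∀ x ∈ X, ∀ y ∈ Y, VSwap G T root e x y →
      phi T w v u x y = PhiF T w b c x y (tbc T w b c v u) := by
  intro x hx y hy _
  have hxv := hT.wDist_eq_add_of_forall_mem_support w (hX x hx).2
  have hyu := hT.wDist_eq_add_of_forall_mem_support w (hY y hy).2
  have huy : wDist T w u y = wDist T w u c + wDist T w c y := by
    rw [hT.wDist_comm w u y, hyu, hT.wDist_comm w y c, hT.wDist_comm w c u, add_comm]
  rw [phi, PhiF, tbc, hxv, huy]
  ring

/-- for every `g = (x, y) ∈ S(e, X, Y)`,
`φ(f, g) = Φ_{b,c,g}(t_{b,c}(f))`. -/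
theorem stmt_3 (G T : SimpleGraph V) (w : Sym2 V → ℝ) (root : V)
    (hw : ∀ a ∈ G.edgeSet, 0 < w a)
    (h2ec : TwoEdgeConnected G)
    (hTG : T ≤ G) (hT : T.IsTree)
    (e : Sym2 V) (he : e ∈ T.edgeSet)
    (v u : V) (hf : VSwap G T root e v u)
    (b c : V) (hb : b ∈ Ue T root e) (hc : c ∈ De T root e)
    (X Y : Set V)
    -- every `x ∈ X` is in `U_e` and `b` lies on the unique path of `T` from `x` to `v`
    (hX : ∀ x ∈ X, x ∈ Ue T root e ∧ ∀ p : T.Walk x v, p.IsPath → b ∈ p.support)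
    -- every `y ∈ Y` is in `D_e` and `c` lies on the unique path of `T` from `y` to `u`
    (hY : ∀ y ∈ Y, y ∈ De T root e ∧ ∀ p : T.Walk y u, p.IsPath → c ∈ p.support) :
    ∀ x ∈ X, ∀ y ∈ Y, VSwap G T root e x y →
      phi T w v u x y = PhiF T w b c x y (tbc T w b c v u) :=
  stmt_3_general G T w root hT e v u b c X Y hX hY
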